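/- Let X be a real linear n-normed space and M a total subset of X*_F (i.e., the closed linear span of M is X*_F). A sequence {x_k} in X converges b-weakly to x ∈ X if and only if (I) {‖x_k, b₂, ..., bₙ‖} is bounded and (II) T(x_k, b₂, ..., bₙ) → T(x, b₂, ..., bₙ) for every T ∈ M. -/

import Mathlib

/-!
Give `X` the seminorm `p = ‖·, b₂, …, bₙ‖`; bounded `b`-linear functionals are then exactly the
continuous linear functionals of the seminormed space `(X, p)`. A `b`-weakly convergent sequence
is a pointwise bounded family in the bidual, hence bounded by Banach–Steinhaus, and the bidual
embedding is isometric by Hahn–Banach. Conversely, if `p (u k) ≤ C` and `‖T - S‖ < δ`, then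
`|T (u k) - T x| ≤ δ (C + p x) + |S (u k) - S x|`, and `S` may be taken in the span of `M`,
along which convergence holds by linearity.
-/

open Function Filter Topology

/-- An `n`-norm on a real vector space `X` (axioms N1-N4). -/
structure NNorm (n : ℕ) (X : Type*) [AddCommGroup X] [Module ℝ X] where
  toFun : (Fin n → X) → ℝ
  eq_zero_iff : ∀ v : Fin n → X, toFun v = 0 ↔ ¬ LinearIndependent ℝ v
  perm_invariant : ∀ (σ : Equiv.Perm (Fin n)) (v : Fin n → X), toFun (v ∘ σ) = toFun v
  smul_eq : ∀ (α : ℝ) (v : Fin n → X) (i : Fin n),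
      toFun (Function.update v i (α • v i)) = |α| * toFun v
  add_le : ∀ (v : Fin n → X) (i : Fin n) (x y : X),
      toFun (Function.update v i (x + y)) ≤
        toFun (Function.update v i x) + toFun (Function.update v i y)

variable {n : ℕ} {X : Type*} [AddCommGroup X] [Module ℝ X]

/-- The seminorm `x ↦ ‖x, b₂, …, bₙ‖` obtained by fixing the vectors `b` in all slots
but the first. -/
noncomputable def bsem (N : NNorm (n + 1) X) (b : Fin (n + 1) → X) (x : X) : ℝ :=
  N.toFun (Function.update b 0 x)

section Generic

variable {V : Type*} [AddCommGroup V] [Module ℝ V]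

/-- A `b`-linear functional: additive and homogeneous in its first argument. -/
def IsBLinear (T : V → ℝ) : Prop :=
  (∀ x y : V, T (x + y) = T x + T y) ∧ ∀ (k : ℝ) (x : V), T (k • x) = k * T x

/-- A bounded `b`-linear functional with respect to a seminorm `p`. -/
def IsBddBLinearP (p : V → ℝ) (T : V → ℝ) : Prop :=
  IsBLinear T ∧ ∃ M > 0, ∀ x : V, |T x| ≤ M * p x

/-- The norm of a bounded `b`-linear functional with respect to a seminorm `p`. -/
noncomputable def bnormP (p : V → ℝ) (T : V → ℝ) : ℝ :=
  sInf {M : ℝ | 0 < M ∧ ∀ x : V, |T x| ≤ M * p x}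

end Generic

/-- A bounded `b`-linear functional on `X × ⟨b₂⟩ × ⋯ × ⟨bₙ⟩`. -/
def IsBddBLinear (N : NNorm (n + 1) X) (b : Fin (n + 1) → X) (T : X → ℝ) : Prop :=
  IsBddBLinearP (bsem N b) T

/-- The norm of a bounded `b`-linear functional on `X × ⟨b₂⟩ × ⋯ × ⟨bₙ⟩`. -/
noncomputable def bnorm (N : NNorm (n + 1) X) (b : Fin (n + 1) → X) (T : X → ℝ) : ℝ :=
  bnormP (bsem N b) T

/-- Convergence of a sequence in a linear `n`-normed space. -/
def NConv (N : NNorm (n + 1) X) (u : ℕ → X) (x : X) : Prop :=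
  ∀ v : Fin (n + 1) → X,
    Tendsto (fun k => N.toFun (Function.update v 0 (u k - x))) atTop (nhds 0)

/-- A subspace is closed if it contains all limits of its convergent sequences. -/
def IsClosedSub (N : NNorm (n + 1) X) (W : Submodule ℝ X) : Prop :=
  ∀ u : ℕ → X, (∀ k, u k ∈ W) → ∀ x : X, NConv N u x → x ∈ W

/-- `b`-weak convergence of a sequence. -/
def BWeakConv (N : NNorm (n + 1) X) (b : Fin (n + 1) → X) (u : ℕ → X) (x : X) : Prop :=
  ∀ T : X → ℝ, IsBddBLinear N b T →
    Tendsto (fun k => T (u k)) atTop (nhds (T x))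

lemma tendsto_apply_of_mem_span {V : Type*} {M : Set (V → ℝ)} {u : ℕ → V} {x : V}
    (hM : ∀ T ∈ M, Tendsto (fun k => T (u k)) atTop (𝓝 (T x))) {S : V → ℝ}
    (hS : S ∈ Submodule.span ℝ M) : Tendsto (fun k => S (u k)) atTop (𝓝 (S x)) := by
  induction hS using Submodule.span_induction with
  | mem T hT => exact hM T hT
  | zero => exact tendsto_const_nhds
  | add S T _ _ hS hT => exact hS.add hT
  | smul c S _ hS => exact hS.const_mul c

section BoundedFunctionals

variable {V : Type*} [AddCommGroup V] [Module ℝ V]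

lemma isBddBLinearP_of_le (p : Seminorm ℝ V) {T : V → ℝ} (hT : IsBLinear T) (C : ℝ)
    (hC : ∀ x, |T x| ≤ C * p x) : IsBddBLinearP p T :=
  ⟨hT, max C 1, by positivity, fun x =>
    (hC x).trans (mul_le_mul_of_nonneg_right (le_max_left C 1) (apply_nonneg p x))⟩

def bddBLinear (p : Seminorm ℝ V) : Submodule ℝ (V → ℝ) where
  carrier := {T | IsBddBLinearP p T}
  zero_mem' := isBddBLinearP_of_le p ⟨fun _ _ => by simp, fun _ _ => by simp⟩ 0 fun _ => by simp
  add_mem' := by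
    rintro S T ⟨⟨hSa, hSs⟩, A, -, hA⟩ ⟨⟨hTa, hTs⟩, B, -, hB⟩
    refine isBddBLinearP_of_le p ⟨fun x y => ?_, fun c x => ?_⟩ (A + B) fun x => ?_
    · simp only [Pi.add_apply, hSa, hTa]; ring
    · simp only [Pi.add_apply, hSs, hTs]; ring
    · calc |S x + T x| ≤ |S x| + |T x| := abs_add_le _ _
        _ ≤ A * p x + B * p x := add_le_add (hA x) (hB x)
        _ = (A + B) * p x := by ring
  smul_mem' := by
    rintro c T ⟨⟨hTa, hTs⟩, A, -, hA⟩
    refine isBddBLinearP_of_le p ⟨fun x y => ?_, fun k x => ?_⟩ (|c| * A) fun x => ?_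
    · simp only [Pi.smul_apply, smul_eq_mul, hTa]; ring
    · simp only [Pi.smul_apply, smul_eq_mul, hTs]; ring
    · calc |c * T x| = |c| * |T x| := abs_mul _ _
        _ ≤ |c| * (A * p x) := mul_le_mul_of_nonneg_left (hA x) (abs_nonneg c)
        _ = |c| * A * p x := by ring

lemma IsBddBLinearP.abs_le_of_bnormP_lt {p : V → ℝ} {T : V → ℝ} (hT : IsBddBLinearP p T)
    {δ : ℝ} (hδ : bnormP p T < δ) (x : V) (hx : 0 ≤ p x) : |T x| ≤ δ * p x := by
  obtain ⟨A, ⟨-, hA⟩, hAδ⟩ := (csInf_lt_iff ⟨0, fun _ h => h.1.le⟩ hT.2).mp hδ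
  exact (hA x).trans (mul_le_mul_of_nonneg_right hAδ.le hx)

lemma exists_le_of_forall_isBddBLinearP_bounded (p : Seminorm ℝ V) (u : ℕ → V)
    (h : ∀ T, IsBddBLinearP p T → ∃ C, ∀ k, |T (u k)| ≤ C) : ∃ C, ∀ k, p (u k) ≤ C := by
  let _ : SeminormedAddCommGroup V := p.toSeminormedAddCommGroup
  let _ : NormedSpace ℝ V := ⟨fun c x => (map_smul_eq_mul p c x).le⟩
  have hdual (f : StrongDual ℝ V) : IsBddBLinearP p f :=
    isBddBLinearP_of_le p ⟨f.map_add, f.map_smul⟩ ‖f‖ f.le_opNorm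
  obtain ⟨C, hC⟩ := banach_steinhaus (g := fun k => NormedSpace.inclusionInDoubleDual ℝ V (u k))
    fun f => h f (hdual f)
  exact ⟨C, fun k => ((NormedSpace.inclusionInDoubleDualLi ℝ).norm_map (u k)).symm.trans_le (hC k)⟩

lemma tendsto_apply_of_forall_approx (p : Seminorm ℝ V) {T : V → ℝ} {u : ℕ → V} {x : V}
    {C : ℝ} (hC : ∀ k, p (u k) ≤ C)
    (happrox : ∀ δ > 0, ∃ S : V → ℝ, (∀ y, |T y - S y| ≤ δ * p y) ∧
      Tendsto (fun k => S (u k)) atTop (𝓝 (S x))) :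
    Tendsto (fun k => T (u k)) atTop (𝓝 (T x)) := by
  rw [Metric.tendsto_atTop]
  intro ε hε
  have hC0 : 0 ≤ C := (apply_nonneg p (u 0)).trans (hC 0)
  have hD : 0 < C + p x + 1 := by linarith [apply_nonneg p x]
  set δ := ε / (2 * (C + p x + 1))
  obtain ⟨S, hTS, hS⟩ := happrox δ (by positivity)
  obtain ⟨K, hK⟩ := Metric.tendsto_atTop.mp hS (ε / 2) (by positivity)
  refine ⟨K, fun k hk => ?_⟩
  have hδ : δ * (C + p x) < ε / 2 := by
    rw [div_mul_eq_mul_div, div_lt_div_iff₀ (by positivity) two_pos]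
    nlinarith
  rw [Real.dist_eq]
  calc |T (u k) - T x|
      = |(T (u k) - S (u k)) - (T x - S x) + (S (u k) - S x)| := by ring_nf
    _ ≤ |T (u k) - S (u k)| + |T x - S x| + |S (u k) - S x| :=
        (abs_add_le _ _).trans (add_le_add_left (abs_sub _ _) _)
    _ < δ * (C + p x) + ε / 2 := by
        have := (hTS (u k)).trans (mul_le_mul_of_nonneg_left (hC k) (by positivity))
        linarith [hTS x, Real.dist_eq _ _ ▸ hK k hk]
    _ < ε := by linarith

end BoundedFunctionals

lemma bsem_smul (N : NNorm (n + 1) X) (b : Fin (n + 1) → X) (c : ℝ) (x : X) :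
    bsem N b (c • x) = |c| * bsem N b x := by
  simpa only [bsem, update_self, update_idem] using N.smul_eq c (update b 0 x) 0

noncomputable def NNorm.bSeminorm (N : NNorm (n + 1) X) (b : Fin (n + 1) → X) : Seminorm ℝ X :=
  Seminorm.of (bsem N b) (N.add_le b 0) (bsem_smul N b)

theorem stmt13_general (N : NNorm (n + 1) X) (b : Fin (n + 1) → X)
    (M : Set (X → ℝ))
    (hM : ∀ S ∈ M, IsBddBLinear N b S)
    (htotal : ∀ T : X → ℝ, IsBddBLinear N b T → ∀ ε > (0 : ℝ),
      ∃ S ∈ Submodule.span ℝ M, bnorm N b (T - S) < ε)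
    (u : ℕ → X) (x : X) :
    BWeakConv N b u x ↔
      ((∃ C : ℝ, ∀ k, bsem N b (u k) ≤ C) ∧
        ∀ T ∈ M, Tendsto (fun k => T (u k)) atTop (nhds (T x))) := by
  let p := N.bSeminorm b
  constructor
  · intro h
    refine ⟨exists_le_of_forall_isBddBLinearP_bounded p u fun T hT => ?_,
      fun T hT => h T (hM T hT)⟩
    obtain ⟨C, hC⟩ := (h T hT).abs.bddAbove_range
    exact ⟨C, fun k => hC (Set.mem_range_self k)⟩
  · rintro ⟨⟨C, hC⟩, hMconv⟩ T hT
    refine tendsto_apply_of_forall_approx p hC fun δ hδ => ?_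
    obtain ⟨S, hSM, hTS⟩ := htotal T hT δ hδ
    have hS : S ∈ bddBLinear p := (Submodule.span_le (p := bddBLinear p)).mpr hM hSM
    exact ⟨S, fun y => ((bddBLinear p).sub_mem hT hS).abs_le_of_bnormP_lt hTS y
      (apply_nonneg p y), tendsto_apply_of_mem_span hMconv hSM⟩

theorem stmt13 (N : NNorm (n + 1) X) (b : Fin (n + 1) → X)
    (hdim : ↑(n + 1) ≤ Module.rank ℝ X) (M : Set (X → ℝ))
    (hM : ∀ S ∈ M, IsBddBLinear N b S)
    (htotal : ∀ T : X → ℝ, IsBddBLinear N b T → ∀ ε > (0 : ℝ),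
      ∃ S ∈ Submodule.span ℝ M, bnorm N b (T - S) < ε)
    (u : ℕ → X) (x : X) :
    BWeakConv N b u x ↔
      ((∃ C : ℝ, ∀ k, bsem N b (u k) ≤ C) ∧
        ∀ T ∈ M, Tendsto (fun k => T (u k)) atTop (nhds (T x))) :=
  stmt13_general N b M hM htotal u x
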